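/- Let {μ_k} be a sequence of probability measures on a countable group G, each with finite Shannon entropy, converging pointwise to μ with H(μ) < ∞ and H(μ_k) → H(μ). If for every ε > 0 there is a finite set F ⊆ G with ∑_{x∉F} −μ_k(x) log μ_k(x) < ε for all k (entropy-tightness), and π: G → Q is a surjective group homomorphism to a countable group Q, then the sequence of pushforwards {π_*μ_k} is entropy-tight on Q. -/

import Mathlib

/-!
On a fiber `π⁻¹(q)` the mass `π_*ν(q)` dominates every `ν(h)`, so
`-π_*ν(q) log π_*ν(q) = ∑_h -ν(h) log π_*ν(q) ≤ ∑_h -ν(h) log ν(h)`.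
Summing over `q ∉ π(F)` bounds the tail entropy of `π_*ν` outside `π(F)` by the tail entropy
of `ν` outside `F`, uniformly in `ν`; so a finite set `F` witnessing tightness upstairs gives
the witness `π(F)` downstairs.
-/

open Real Filter
open scoped ENNReal Classical

noncomputable section

/-- A probability mass function on a countable set, as a real-valued function. -/
def IsPMF {G : Type*} (μ : G → ℝ) : Prop := (∀ g, 0 ≤ μ g) ∧ ∑' g, μ g = 1

/-- Convolution of two measures on a group. -/
def conv {G : Type*} [Group G] (μ ν : G → ℝ) : G → ℝ := fun g => ∑' h : G, μ h * ν (h⁻¹ * g)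

/-- `n`-fold convolution power, with `μ^{*0} = δ_e`. -/
def convPow {G : Type*} [Group G] (μ : G → ℝ) : ℕ → G → ℝ
  | 0 => fun g => if g = 1 then 1 else 0
  | n + 1 => conv (convPow μ n) μ

/-- Shannon entropy of a measure on a countable set. -/
def Hent {G : Type*} (μ : G → ℝ) : ℝ := ∑' g : G, Real.negMulLog (μ g)

/-- Position of the random walk after `m` steps, given the first `n` increments. -/
def walkProd {G : Type*} [Monoid G] {n : ℕ} (g : Fin n → G) (m : ℕ) : G :=
  ((List.ofFn g).take m).prod

/-- The escape probability of the `μ`-random walk: the probability of never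
returning to the identity at any positive time, expressed as the infimum of the
finite-time non-return probabilities. -/
def pesc {G : Type*} [Group G] (μ : G → ℝ) : ℝ :=
  ⨅ n : ℕ, ∑' g : Fin n → G,
    if ∀ m, 1 ≤ m → m ≤ n → walkProd g m ≠ 1 then ∏ i, μ (g i) else 0

/-- Pushforward of a measure through a map. -/
def pushf {G₁ G₂ : Type*} (pr : G₁ → G₂) (μ : G₁ → ℝ) : G₂ → ℝ :=
  fun h => ∑' g : {g : G₁ // pr g = h}, μ (g : G₁)


namespace IsPMF

variable {α : Type*} {ν : α → ℝ}

theorem summable (hν : IsPMF ν) : Summable ν := by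
  by_contra h
  simpa [tsum_eq_zero_of_not_summable h] using hν.2

theorem le_one (hν : IsPMF ν) (a : α) : ν a ≤ 1 :=
  hν.2 ▸ hν.summable.le_tsum a fun b _ => hν.1 b

theorem negMulLog_nonneg (hν : IsPMF ν) (a : α) : 0 ≤ negMulLog (ν a) :=
  Real.negMulLog_nonneg (hν.1 a) (hν.le_one a)

theorem pushf {β : Type*} (hν : IsPMF ν) (f : α → β) : IsPMF (pushf f ν) :=
  ⟨fun _ => tsum_nonneg fun a => hν.1 a,
    hν.2 ▸ (hν.summable.hasSum.tsum_fiberwise f).tsum_eq⟩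

end IsPMF

theorem negMulLog_tsum_le {ι : Type*} {ν : ι → ℝ} (hν0 : ∀ i, 0 ≤ ν i) (hν : Summable ν)
    (hH : Summable fun i => negMulLog (ν i)) :
    negMulLog (∑' i, ν i) ≤ ∑' i, negMulLog (ν i) := by
  have hterm : ∀ i, -ν i * log (∑' j, ν j) ≤ negMulLog (ν i) := by
    intro i
    rcases (hν0 i).eq_or_lt with hi | hi
    · simp [← hi]
    · have hlog : log (ν i) ≤ log (∑' j, ν j) :=
        log_le_log hi (hν.le_tsum i fun j _ => hν0 j)
      rw [negMulLog, neg_mul, neg_mul, neg_le_neg_iff]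
      exact mul_le_mul_of_nonneg_left hlog (hν0 i)
  calc negMulLog (∑' i, ν i) = ∑' i, -ν i * log (∑' j, ν j) := by
        rw [tsum_mul_right, tsum_neg, negMulLog, neg_mul]
    _ ≤ ∑' i, negMulLog (ν i) := hν.neg.mul_right _ |>.tsum_le_tsum hterm hH

theorem tsum_preimage_eq_tsum_fiber {α β M : Type*} [AddCommGroup M] [UniformSpace M]
    [IsUniformAddGroup M] [CompleteSpace M] [T2Space M] (f : α → β) (T : Set β) {φ : α → M}
    (hφ : Summable φ) :
    ∑' a : f ⁻¹' T, φ a = ∑' b : T, ∑' a : {a // f a = b}, φ a := by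
  have hfiber : ∀ b, ∑' a : f ⁻¹' {b}, (f ⁻¹' T).indicator φ a =
      T.indicator (fun b => ∑' a : {a // f a = b}, φ a) b := by
    intro b
    by_cases hb : b ∈ T
    · rw [Set.indicator_of_mem hb]
      refine tsum_congr fun a => Set.indicator_of_mem ?_ φ
      rwa [Set.mem_preimage, a.2]
    · rw [Set.indicator_of_notMem hb, ← tsum_zero]
      refine tsum_congr fun a => Set.indicator_of_notMem ?_ φ
      rwa [Set.mem_preimage, a.2]
  rw [tsum_subtype, tsum_subtype T (fun b => ∑' a : {a // f a = b}, φ a), ← tsum_congr hfiber]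
  exact (((hφ.indicator (f ⁻¹' T)).hasSum.tsum_fiberwise f).tsum_eq).symm

theorem tsum_mono_subtype_of_nonneg {α : Type*} {φ : α → ℝ} {s t : Set α} (hst : s ⊆ t)
    (hφ0 : ∀ a, 0 ≤ φ a) (hφ : Summable φ) :
    ∑' a : s, φ a ≤ ∑' a : t, φ a := by
  rw [tsum_subtype, tsum_subtype]
  exact (hφ.indicator _).tsum_le_tsum (Set.indicator_le_indicator_of_subset hst hφ0)
    (hφ.indicator _)

theorem tsum_negMulLog_pushf_le {α β : Type*} (f : α → β) {ν : α → ℝ} (hν : IsPMF ν)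
    (hH : Summable fun a => negMulLog (ν a)) (T : Set β) :
    ∑' b : T, negMulLog (pushf f ν b) ≤ ∑' a : f ⁻¹' T, negMulLog (ν a) := by
  have hfiber : ∀ b, negMulLog (pushf f ν b) ≤ ∑' a : {a // f a = b}, negMulLog (ν a) :=
    fun b => negMulLog_tsum_le (fun a => hν.1 a) (hν.summable.subtype _) (hH.subtype _)
  have hsum : Summable fun b : T => ∑' a : {a // f a = b}, negMulLog (ν a) :=
    (hH.hasSum.tsum_fiberwise f).summable.subtype T
  rw [tsum_preimage_eq_tsum_fiber f T hH]
  exact (hsum.of_nonneg_of_le (fun b : T => (hν.pushf f).negMulLog_nonneg b)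
    fun b => hfiber b).tsum_le_tsum (fun b => hfiber b) hsum

theorem stmt4_general {G Q : Type*} [Group G] [Group Q]
    (pr : G →* Q) (μk : ℕ → G → ℝ)
    (hμk : ∀ k, IsPMF (μk k))
    (hHμk : ∀ k, Summable (fun g => Real.negMulLog (μk k g)))
    (htight : ∀ ε > (0 : ℝ), ∃ F : Finset G,
      ∀ k, ∑' g : {g : G // g ∉ F}, Real.negMulLog (μk k (g : G)) < ε) :
    ∀ ε > (0 : ℝ), ∃ F' : Finset Q,
      ∀ k, ∑' q : {q : Q // q ∉ F'}, Real.negMulLog (pushf pr (μk k) (q : Q)) < ε := by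
  intro ε hε
  obtain ⟨F, hF⟩ := htight ε hε
  refine ⟨F.image pr, fun k => ?_⟩
  have hpreimage : pr ⁻¹' (↑(F.image pr) : Set Q)ᶜ ⊆ (↑F : Set G)ᶜ :=
    fun g hg hgF => hg (Finset.mem_image_of_mem pr hgF)
  calc _ ≤ ∑' g : pr ⁻¹' (↑(F.image pr) : Set Q)ᶜ, negMulLog (μk k g) :=
        tsum_negMulLog_pushf_le pr (hμk k) (hHμk k) _
    _ ≤ ∑' g : ((↑F : Set G)ᶜ : Set G), negMulLog (μk k g) :=
        tsum_mono_subtype_of_nonneg hpreimage (hμk k).negMulLog_nonneg (hHμk k)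
    _ < ε := hF k

/-- Entropy-tightness of a sequence of probability measures is preserved under
pushforward through a surjective homomorphism. -/
theorem stmt4 {G Q : Type*} [Group G] [Group Q] [Countable G] [Countable Q]
    (pr : G →* Q) (hsurj : Function.Surjective pr) (μ : G → ℝ) (μk : ℕ → G → ℝ)
    (hμ : IsPMF μ) (hμk : ∀ k, IsPMF (μk k))
    (hHμ : Summable (fun g => Real.negMulLog (μ g)))
    (hHμk : ∀ k, Summable (fun g => Real.negMulLog (μk k g)))
    (hconv : ∀ g : G, Tendsto (fun k => μk k g) atTop (nhds (μ g)))
    (hHconv : Tendsto (fun k => Hent (μk k)) atTop (nhds (Hent μ)))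
    (htight : ∀ ε > (0 : ℝ), ∃ F : Finset G,
      ∀ k, ∑' g : {g : G // g ∉ F}, Real.negMulLog (μk k (g : G)) < ε) :
    ∀ ε > (0 : ℝ), ∃ F' : Finset Q,
      ∀ k, ∑' q : {q : Q // q ∉ F'}, Real.negMulLog (pushf pr (μk k) (q : Q)) < ε :=
  stmt4_general pr μk hμk hHμk htight
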